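/- Let R be a pseudo-valuation domain. Then for all nonzero ideals J ⊆ I of R, J is a t-reduction of I if and only if J_t is a reduction of I_t. -/

import Mathlib

open scoped nonZeroDivisors

/-- The `v`-operation (divisorial closure) on `R`-submodules of the fraction field `K`:
`I_v = (I⁻¹)⁻¹` where `I⁻¹ = (R : I) = 1 / I`. -/
noncomputable def vS (R K : Type*) [CommRing R] [Field K] [Algebra R K]
    (I : Submodule R K) : Submodule R K := 1 / (1 / I)

/-- The `t`-operation: `I_t = ⋃ J_v` where `J` ranges over nonzero finitely generated
sub-ideals of `I`. -/
noncomputable def tS (R K : Type*) [CommRing R] [Field K] [Algebra R K]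
    (I : Submodule R K) : Submodule R K :=
  ⨆ J ∈ {J : Submodule R K | J ≠ ⊥ ∧ J.FG ∧ J ≤ I}, vS R K J

/-- The image of an ideal of `R` in the fraction field `K`, as an `R`-submodule. -/
noncomputable def idealToSub (R K : Type*) [CommRing R] [Field K] [Algebra R K]
    (I : Ideal R) : Submodule R K := Submodule.map (Algebra.linearMap R K) I

/-- The `t`-closure of an ideal of `R`, computed in the fraction field `K`. -/
noncomputable def tI (R K : Type*) [CommRing R] [Field K] [Algebra R K]
    (I : Ideal R) : Submodule R K := tS R K (idealToSub R K I)

/-- The `v`-closure of an ideal of `R`, computed in the fraction field `K`. -/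
noncomputable def vI (R K : Type*) [CommRing R] [Field K] [Algebra R K]
    (I : Ideal R) : Submodule R K := vS R K (idealToSub R K I)

/-!
The implication from right to left holds in any domain: `t` is a star operation of finite type, so
`J * I ^ n` and `J_t * I_t ^ n` have the same `t`-closure.

For the converse let `W` be the valuation overring of `R` inside the fraction field, with maximal
ideal `M ⊆ R`. A `W`-module `A` is `t`-closed: if `W = R` then `R` is a valuation domain and `t` is
the identity; otherwise pick `u ∈ W \ R`; for `x ∉ A` we get `A ⊆ x M`, so `u x⁻¹ ∈ R : A` while
`x · u x⁻¹ = u ∉ R`, hence `x ∉ A_v`. If `A` is not a `W`-module, then `A ⊆ a W` for some `a ∈ A`,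
and either `A = a R`, or `A` contains `a`, `a u` with `u ∈ W \ R` and `A_t = a (R + R u)_v = a W`.
So `I_t` is either principal, and cancelling `I_t ^ n` gives `J_t = I_t`, or a `W`-module, and
then every product `X * I_t` is `t`-closed, which turns the `t`-reduction equation for `n` into the
reduction equation for `n + 1`.
-/

section StarOperations

variable {R : Type*} [CommRing R] {Q : Type*} [Field Q] [Algebra R Q]

theorem idealToSub_mul (I J : Ideal R) :
    idealToSub R Q (I * J) = idealToSub R Q I * idealToSub R Q J :=
  Submodule.map_mul I J (Algebra.ofId R Q)

theorem idealToSub_pow (I : Ideal R) (n : ℕ) :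
    idealToSub R Q (I ^ n) = idealToSub R Q I ^ n :=
  Submodule.map_pow I (Algebra.ofId R Q) n

theorem mem_vS {A : Submodule R Q} {x : Q} :
    x ∈ vS R Q A ↔ ∀ y ∈ (1 : Submodule R Q) / A, x * y ∈ (1 : Submodule R Q) :=
  Submodule.mem_div_iff_forall_mul_mem

theorem one_div_anti {A B : Submodule R Q} (h : A ≤ B) :
    (1 : Submodule R Q) / B ≤ 1 / A :=
  Submodule.le_div_iff_mul_le.mpr <|
    (mul_le_mul_right h _).trans (mul_comm B _ ▸ Submodule.mul_one_div_le_one)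

theorem le_vS (A : Submodule R Q) : A ≤ vS R Q A :=
  Submodule.le_div_iff_mul_le.mpr Submodule.mul_one_div_le_one

theorem vS_mono {A B : Submodule R Q} (h : A ≤ B) : vS R Q A ≤ vS R Q B :=
  one_div_anti (one_div_anti h)

theorem one_div_vS (A : Submodule R Q) : (1 : Submodule R Q) / vS R Q A = 1 / A :=
  le_antisymm (one_div_anti (le_vS A)) (le_vS _)

theorem vS_idem (A : Submodule R Q) : vS R Q (vS R Q A) = vS R Q A :=
  congrArg (1 / ·) (one_div_vS A)

theorem vS_mul_vS_le (A B : Submodule R Q) : vS R Q A * vS R Q B ≤ vS R Q (A * B) := by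
  have hB : vS R Q B * (1 / (A * B)) ≤ 1 / A := by
    rw [Submodule.le_div_iff_mul_le, mul_assoc, ← Submodule.le_div_iff_mul_le]
    refine one_div_anti (Submodule.le_div_iff_mul_le.mpr ?_)
    rw [mul_assoc, mul_comm]
    exact Submodule.mul_one_div_le_one
  refine Submodule.le_div_iff_mul_le.mpr ?_
  rw [mul_assoc]
  exact (mul_le_mul_right hB _).trans (mul_comm (1 / A) _ ▸ Submodule.mul_one_div_le_one)

theorem one_div_units_mul (U : (Submodule R Q)ˣ) (A : Submodule R Q) :
    (1 : Submodule R Q) / (U * A) = ↑U⁻¹ * (1 / A) :=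
  eq_of_forall_le_iff fun X => by
    rw [Units.le_inv_mul_iff, Submodule.le_div_iff_mul_le, Submodule.le_div_iff_mul_le,
      mul_left_comm, mul_assoc]

theorem vS_units_mul (U : (Submodule R Q)ˣ) (A : Submodule R Q) :
    vS R Q (U * A) = U * vS R Q A := by
  rw [vS, one_div_units_mul, one_div_units_mul, inv_inv, vS]

theorem vS_one : vS R Q 1 = 1 := by
  have one_div_one : (1 : Submodule R Q) / 1 = 1 :=
    le_antisymm (fun x hx => by simpa using hx 1 (Submodule.one_le.mp le_rfl))
      (Submodule.le_div_iff_mul_le.mpr (mul_one _).le)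
  rw [vS, one_div_one, one_div_one]

theorem vS_units (U : (Submodule R Q)ˣ) : vS R Q U = U := by
  simpa [vS_one] using vS_units_mul U 1


theorem tS_le {A B : Submodule R Q}
    (h : ∀ J : Submodule R Q, J ≠ ⊥ → J.FG → J ≤ A → vS R Q J ≤ B) : tS R Q A ≤ B :=
  iSup₂_le fun J hJ => h J hJ.1 hJ.2.1 hJ.2.2

theorem vS_le_tS {A J : Submodule R Q} (hJ : J ≠ ⊥) (hJfg : J.FG) (hJA : J ≤ A) :
    vS R Q J ≤ tS R Q A :=
  le_iSup₂_of_le J ⟨hJ, hJfg, hJA⟩ le_rfl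

theorem tS_le_vS (A : Submodule R Q) : tS R Q A ≤ vS R Q A :=
  tS_le fun _ _ _ hJA => vS_mono hJA

theorem le_tS (A : Submodule R Q) : A ≤ tS R Q A := by
  intro x hx
  rcases eq_or_ne x 0 with rfl | hx0
  · exact zero_mem _
  refine vS_le_tS (by simpa using hx0) (Submodule.fg_span_singleton x) ?_
    (le_vS _ (Submodule.mem_span_singleton_self x))
  exact (Submodule.span_singleton_le_iff_mem x A).mpr hx

theorem tS_mono {A B : Submodule R Q} (h : A ≤ B) : tS R Q A ≤ tS R Q B :=
  tS_le fun _ hJ hJfg hJA => vS_le_tS hJ hJfg (hJA.trans h)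

theorem exists_le_vS_of_le_tS {A F : Submodule R Q} (hF : F ≠ ⊥) (hFfg : F.FG)
    (hFA : F ≤ tS R Q A) : ∃ G : Submodule R Q, G ≠ ⊥ ∧ G.FG ∧ G ≤ A ∧ F ≤ vS R Q G := by
  set S := {J : Submodule R Q | J ≠ ⊥ ∧ J.FG ∧ J ≤ A}
  have hS : tS R Q A = sSup (vS R Q '' S) := by rw [sSup_image]; rfl
  have hne : (vS R Q '' S).Nonempty := by
    refine Set.nonempty_iff_ne_empty.mpr fun h => hF (le_bot_iff.mp ?_)
    rwa [hS, h, sSup_empty] at hFA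
  have hdir : DirectedOn (· ≤ ·) (vS R Q '' S) := by
    rintro _ ⟨J, ⟨hJ, hJfg, hJA⟩, rfl⟩ _ ⟨K, ⟨-, hKfg, hKA⟩, rfl⟩
    exact ⟨_, ⟨J ⊔ K, ⟨fun h => hJ (le_bot_iff.mp (h ▸ le_sup_left)), hJfg.sup hKfg,
      sup_le hJA hKA⟩, rfl⟩, vS_mono le_sup_left, vS_mono le_sup_right⟩
  obtain ⟨_, ⟨G, hG, rfl⟩, hFG⟩ :=
    (CompleteLattice.isCompactElement_iff_le_of_directed_sSup_le _ F).mp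
      ((Submodule.fg_iff_compact F).mp hFfg) _ hne hdir (hS ▸ hFA)
  exact ⟨G, hG.1, hG.2.1, hG.2.2, hFG⟩

theorem tS_idem (A : Submodule R Q) : tS R Q (tS R Q A) = tS R Q A := by
  refine le_antisymm (tS_le fun F hF hFfg hFA => ?_) (le_tS _)
  obtain ⟨G, hG, hGfg, hGA, hFG⟩ := exists_le_vS_of_le_tS hF hFfg hFA
  exact (vS_mono hFG).trans ((vS_idem G).le.trans (vS_le_tS hG hGfg hGA))

theorem tS_mul_tS_le (A B : Submodule R Q) : tS R Q A * tS R Q B ≤ tS R Q (A * B) := by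
  simp only [tS, Submodule.iSup_mul, Submodule.mul_iSup]
  refine iSup₂_le fun G hG => iSup₂_le fun F hF => (vS_mul_vS_le F G).trans (vS_le_tS ?_
    (hF.2.1.mul hG.2.1) (mul_le_mul' hF.2.2 hG.2.2))
  exact Submodule.mul_eq_bot.not.mpr (not_or.mpr ⟨hF.1, hG.1⟩)

theorem tS_tS_mul_tS (A B : Submodule R Q) :
    tS R Q (tS R Q A * tS R Q B) = tS R Q (A * B) :=
  le_antisymm ((tS_mono (tS_mul_tS_le A B)).trans (tS_idem _).le)
    (tS_mono (mul_le_mul' (le_tS A) (le_tS B)))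

theorem tS_tS_mul (A B : Submodule R Q) : tS R Q (tS R Q A * B) = tS R Q (A * B) := by
  rw [← tS_tS_mul_tS, tS_idem, tS_tS_mul_tS]

theorem tS_mul_tS (A B : Submodule R Q) : tS R Q (A * tS R Q B) = tS R Q (A * B) := by
  rw [mul_comm, tS_tS_mul, mul_comm]

theorem tS_tS_pow (A : Submodule R Q) (n : ℕ) : tS R Q (tS R Q A ^ n) = tS R Q (A ^ n) := by
  induction n with
  | zero => rfl
  | succ n ih => rw [pow_succ, pow_succ, ← tS_tS_mul_tS, tS_idem, ih, tS_tS_mul_tS]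

theorem tS_tS_mul_tS_pow (A B : Submodule R Q) (n : ℕ) :
    tS R Q (tS R Q A * tS R Q B ^ n) = tS R Q (A * B ^ n) := by
  rw [tS_tS_mul, ← tS_mul_tS, tS_tS_pow, tS_mul_tS]

theorem units_mul_tS_le (U : (Submodule R Q)ˣ) (A : Submodule R Q) :
    U * tS R Q A ≤ tS R Q (U * A) := by
  simp only [tS, Submodule.mul_iSup]
  refine iSup₂_le fun F hF => (vS_units_mul U F).symm.le.trans (vS_le_tS ?_
    ((Submodule.fg_unit U).mul hF.2.1) (mul_le_mul_right hF.2.2 _))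
  intro h
  exact hF.1 (by simpa using congrArg ((↑U⁻¹ : Submodule R Q) * ·) h)

theorem tS_units_mul (U : (Submodule R Q)ˣ) (A : Submodule R Q) :
    tS R Q (U * A) = U * tS R Q A := by
  refine le_antisymm ?_ (units_mul_tS_le U A)
  rw [← Units.inv_mul_le_iff]
  simpa using units_mul_tS_le U⁻¹ (U * A)

theorem tS_one : tS R Q 1 = 1 :=
  le_antisymm ((tS_le_vS 1).trans vS_one.le) (le_tS 1)

theorem tS_units (U : (Submodule R Q)ˣ) : tS R Q U = U := by
  simpa [tS_one] using tS_units_mul U 1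

theorem isUnit_span_singleton {x : Q} (hx : x ≠ 0) : IsUnit (Submodule.span R {x}) :=
  hx.isUnit.map (Submodule.spanSingleton R)

section ValuationDomain

variable (hval : ∀ q : Q, q ∈ (1 : Submodule R Q) ∨ q⁻¹ ∈ (1 : Submodule R Q))
include hval

theorem span_singleton_le_or_le (a b : Q) :
    Submodule.span R {a} ≤ Submodule.span R {b} ∨ Submodule.span R {b} ≤ Submodule.span R {a} := by
  have span_le {a b : Q} (hb : b ≠ 0) (h : a * b⁻¹ ∈ (1 : Submodule R Q)) :
      Submodule.span R {a} ≤ Submodule.span R {b} := by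
    obtain ⟨r, hr⟩ := Submodule.mem_one.mp h
    refine (Submodule.span_singleton_le_iff_mem _ _).mpr (Submodule.mem_span_singleton.mpr ⟨r, ?_⟩)
    rw [Algebra.smul_def, hr, inv_mul_cancel_right₀ hb]
  rcases eq_or_ne a 0 with rfl | ha
  · simp
  rcases eq_or_ne b 0 with rfl | hb
  · simp
  refine (hval (a * b⁻¹)).imp (span_le hb) fun h => span_le ha ?_
  rwa [mul_inv, inv_inv, mul_comm] at h

theorem exists_eq_span_singleton_of_fg {F : Submodule R Q} (hF : F.FG) :
    ∃ x : Q, F = Submodule.span R {x} := by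
  induction F, hF using Submodule.fg_induction with
  | singleton x => exact ⟨x, rfl⟩
  | sup F G _ _ hF hG =>
    obtain ⟨⟨x, rfl⟩, ⟨y, rfl⟩⟩ := And.intro hF hG
    rcases span_singleton_le_or_le hval x y with h | h
    · exact ⟨y, sup_eq_right.mpr h⟩
    · exact ⟨x, sup_eq_left.mpr h⟩

theorem tS_eq_self_of_mem_one_or_inv_mem (A : Submodule R Q) : tS R Q A = A := by
  refine le_antisymm (tS_le fun F hF hFfg hFA => ?_) (le_tS A)
  obtain ⟨x, rfl⟩ := exists_eq_span_singleton_of_fg hval hFfg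
  have hx : x ≠ 0 := by rintro rfl; simp at hF
  rwa [← (isUnit_span_singleton hx).unit_spec, vS_units]

end ValuationDomain

theorem tS_mul_pow_eq_of_mul_pow_eq {A B : Submodule R Q} {n : ℕ}
    (h : tS R Q A * tS R Q B ^ n = tS R Q B ^ (n + 1)) :
    tS R Q (A * B ^ n) = tS R Q (B ^ (n + 1)) := by
  rw [← tS_tS_mul_tS_pow, h, tS_tS_pow]

theorem tS_eq_of_isUnit {A B : Submodule R Q} (hB : IsUnit (tS R Q B)) {n : ℕ}
    (h : tS R Q (A * B ^ n) = tS R Q (B ^ (n + 1))) : tS R Q A = tS R Q B := by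
  obtain ⟨U, hU⟩ := hB
  have hA : tS R Q (A * B ^ n) = ↑(U ^ n) * tS R Q A := by
    rw [← tS_tS_mul_tS_pow, ← hU, mul_comm, ← Units.val_pow_eq_pow_val, tS_units_mul, tS_idem]
  have hB : tS R Q (B ^ (n + 1)) = ↑(U ^ n) * ↑U := by
    rw [← tS_tS_pow, ← hU, ← Units.val_pow_eq_pow_val, tS_units, pow_succ, Units.val_mul]
  rw [hA, hB, Units.mul_right_inj] at h
  rw [h, hU]

theorem tS_mul_pow_succ_eq {A B : Submodule R Q}
    (hB : ∀ X : Submodule R Q, tS R Q (X * tS R Q B) = X * tS R Q B) {n : ℕ}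
    (h : tS R Q (A * B ^ n) = tS R Q (B ^ (n + 1))) :
    tS R Q A * tS R Q B ^ (n + 1) = tS R Q B ^ (n + 1 + 1) :=
  calc tS R Q A * tS R Q B ^ (n + 1)
      = tS R Q (tS R Q A * tS R Q B ^ (n + 1)) := by rw [pow_succ, ← mul_assoc, hB]
    _ = tS R Q (tS R Q (A * B ^ n) * B) := by
      rw [tS_tS_mul_tS_pow, tS_tS_mul, pow_succ, mul_assoc]
    _ = tS R Q B ^ (n + 1 + 1) := by
      rw [h, tS_tS_mul, ← pow_succ, ← tS_tS_pow, pow_succ, hB]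

theorem exists_tS_mul_pow_eq_iff (A B : Submodule R Q)
    (hB : IsUnit (tS R Q B) ∨ ∀ X : Submodule R Q, tS R Q (X * tS R Q B) = X * tS R Q B) :
    (∃ n : ℕ, tS R Q (A * B ^ n) = tS R Q (B ^ (n + 1))) ↔
      ∃ n : ℕ, tS R Q A * tS R Q B ^ n = tS R Q B ^ (n + 1) := by
  refine ⟨fun ⟨n, h⟩ => ?_, fun ⟨n, h⟩ => ⟨n, tS_mul_pow_eq_of_mul_pow_eq h⟩⟩
  rcases hB with hB | hB
  · exact ⟨0, by rw [tS_eq_of_isUnit hB h, pow_zero, mul_one, zero_add, pow_one]⟩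
  · exact ⟨n + 1, tS_mul_pow_succ_eq hB h⟩

/-- Models the valuation overring `V` of the pseudo-valuation domain `R` inside `Q`. The last two
fields say that `R` contains the maximal ideal of `V` and that `R ∩ Vˣ = Rˣ`; the latter is where
`k` being a field is used. -/
structure IsPVDValuationOverring (W : Submodule R Q) : Prop where
  one_le : 1 ≤ W
  mul_le : W * W ≤ W
  mem_or_inv_mem (q : Q) : q ∈ W ∨ q⁻¹ ∈ W
  mem_one_of_inv_notMem {q : Q} : q ∈ W → q⁻¹ ∉ W → q ∈ (1 : Submodule R Q)
  inv_mem_one {q : Q} : q ∈ (1 : Submodule R Q) → q⁻¹ ∈ W → q⁻¹ ∈ (1 : Submodule R Q)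

namespace IsPVDValuationOverring

variable {W : Submodule R Q} (hW : IsPVDValuationOverring W)
include hW

theorem mul_mem {a b : Q} (ha : a ∈ W) (hb : b ∈ W) : a * b ∈ W :=
  hW.mul_le (Submodule.mul_mem_mul ha hb)

theorem mul_mem_one_of_inv_notMem {w a : Q} (hw : w ∈ W) (ha : a ∈ W) (ha' : a⁻¹ ∉ W) :
    w * a ∈ (1 : Submodule R Q) := by
  rcases eq_or_ne w 0 with rfl | hw0
  · simp
  refine hW.mem_one_of_inv_notMem (hW.mul_mem hw ha) fun h => ha' ?_
  have := hW.mul_mem hw h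
  rwa [mul_inv, mul_inv_cancel_left₀ hw0] at this

theorem mul_mem_one_of_mul_mem_one {u y w : Q} (hu1 : u ∉ (1 : Submodule R Q))
    (hy : y ∈ (1 : Submodule R Q)) (hyu : y * u ∈ (1 : Submodule R Q)) (hw : w ∈ W) :
    w * y ∈ (1 : Submodule R Q) := by
  rcases eq_or_ne y 0 with rfl | hy0
  · simp
  refine hW.mul_mem_one_of_inv_notMem hw (hW.one_le hy) fun h => hu1 ?_
  simpa [inv_mul_cancel_left₀ hy0] using
    Submodule.mul_mem_mul (hW.inv_mem_one hy h) hyu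

theorem vS_le_of_mul_le {u : Q} (hu : u ∈ W) (hu1 : u ∉ (1 : Submodule R Q))
    {A : Submodule R Q} (hA : W * A ≤ A) : vS R Q A ≤ A := by
  intro z hz
  by_contra hzA
  have hz0 : z ≠ 0 := by rintro rfl; exact hzA (zero_mem A)
  have key : u * z⁻¹ ∈ (1 : Submodule R Q) / A := by
    intro a ha
    rcases eq_or_ne a 0 with rfl | ha0
    · simp
    have hinv : (z⁻¹ * a)⁻¹ ∉ W := fun h => hzA <| by
      have := hA (Submodule.mul_mem_mul h ha)
      rwa [mul_inv, inv_inv, inv_mul_cancel_right₀ ha0] at this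
    rw [mul_assoc]
    exact hW.mul_mem_one_of_inv_notMem hu ((hW.mem_or_inv_mem _).resolve_right hinv) hinv
  have := (mem_vS.mp hz) _ key
  rw [mul_left_comm, mul_inv_cancel₀ hz0, mul_one] at this
  exact hu1 this

theorem mul_mem_of_inv_mul_notMem {A : Submodule R Q} {a d w : Q} (hd : d ∈ A)
    (had : a⁻¹ * d ∉ W) (hw : w ∈ W) : w * a ∈ A := by
  have hd0 : d ≠ 0 := by rintro rfl; simp at had
  have hinv : (d⁻¹ * a)⁻¹ ∉ W := by rwa [mul_inv, inv_inv, mul_comm]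
  obtain ⟨r, hr⟩ := Submodule.mem_one.mp <|
    hW.mul_mem_one_of_inv_notMem hw ((hW.mem_or_inv_mem _).resolve_right hinv) hinv
  have : w * a = r • d := by
    rw [Algebra.smul_def, hr]
    field_simp
  exact this ▸ A.smul_mem r hd

theorem tS_eq_self_of_mul_le {A : Submodule R Q} (hA : W * A ≤ A) : tS R Q A = A := by
  by_cases hW1 : W ≤ 1
  · exact tS_eq_self_of_mem_one_or_inv_mem
      (fun q => (hW.mem_or_inv_mem q).imp (@hW1 _) (@hW1 _)) A
  obtain ⟨u, hu, hu1⟩ := SetLike.not_le_iff_exists.mp hW1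
  exact le_antisymm ((tS_le_vS A).trans (hW.vS_le_of_mul_le hu hu1 hA)) (le_tS A)

theorem tS_mul_eq_of_mul_le {A : Submodule R Q} (hA : W * A ≤ A) (X : Submodule R Q) :
    tS R Q (X * A) = X * A :=
  hW.tS_eq_self_of_mul_le <| by
    rw [mul_left_comm]
    exact mul_le_mul_right hA X

theorem vS_self {u : Q} (hu : u ∈ W) (hu1 : u ∉ (1 : Submodule R Q)) : vS R Q W = W :=
  le_antisymm (hW.vS_le_of_mul_le hu hu1 hW.mul_le) (le_vS W)

theorem vS_span_pair {u : Q} (hu : u ∈ W) (hu1 : u ∉ (1 : Submodule R Q)) :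
    vS R Q (Submodule.span R {1, u}) = W := by
  refine le_antisymm ?_ fun w hw => mem_vS.mpr fun y hy => ?_
  · refine (vS_mono ?_).trans (hW.vS_self hu hu1).le
    exact Submodule.span_le.mpr (Set.insert_subset (hW.one_le (Submodule.one_le.mp le_rfl))
      (Set.singleton_subset_iff.mpr hu))
  have hy1 : y ∈ (1 : Submodule R Q) := by
    simpa using hy 1 (Submodule.subset_span (Set.mem_insert _ _))
  have hyu : y * u ∈ (1 : Submodule R Q) :=
    hy u (Submodule.subset_span (Set.mem_insert_of_mem _ rfl))
  exact hW.mul_mem_one_of_mul_mem_one hu1 hy1 hyu hw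

theorem tS_eq_span_singleton_mul {A : Submodule R Q} {c x : Q} (hc : c ∈ A) (hx : x ∈ A)
    (hA : A ≤ Submodule.span R {c} * W) (hcx : c⁻¹ * x ∉ (1 : Submodule R Q)) :
    tS R Q A = Submodule.span R {c} * W := by
  have hc0 : c ≠ 0 := by rintro rfl; simp at hcx
  obtain ⟨u, hu, rfl⟩ := Submodule.mem_span_singleton_mul.mp (hA hx)
  rw [inv_mul_cancel_left₀ hc0] at hcx
  set U := (isUnit_span_singleton (R := R) hc0).unit
  have hU : (U : Submodule R Q) = Submodule.span R {c} := IsUnit.unit_spec _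
  rw [← hU] at hA ⊢
  refine le_antisymm ((tS_le_vS A).trans ?_) ?_
  · rw [← hW.vS_self hu hcx, ← vS_units_mul]
    exact vS_mono hA
  have hpair : ↑U * Submodule.span R {1, u} = Submodule.span R {c, c * u} := by
    rw [hU, Submodule.span_mul_span, Set.singleton_mul, Set.image_pair, mul_one]
  rw [← hW.vS_span_pair hu hcx, ← vS_units_mul, hpair]
  refine vS_le_tS ?_ (Submodule.fg_span (Set.toFinite _)) (Submodule.span_le.mpr
    (Set.insert_subset hc (Set.singleton_subset_iff.mpr hx)))
  exact (Submodule.ne_bot_iff _).mpr ⟨c, Submodule.subset_span (Set.mem_insert _ _), hc0⟩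

theorem isUnit_tS_or_mul_tS_le (A : Submodule R Q) :
    IsUnit (tS R Q A) ∨ W * tS R Q A ≤ tS R Q A := by
  by_cases hA : W * A ≤ A
  · right
    rwa [hW.tS_eq_self_of_mul_le hA]
  obtain ⟨w, hw, a, ha, hwa⟩ : ∃ w ∈ W, ∃ a ∈ A, w * a ∉ A := by
    simpa [Submodule.mul_le] using hA
  have ha0 : a ≠ 0 := by rintro rfl; simp at hwa
  have haW : ∀ d ∈ A, a⁻¹ * d ∈ W := fun d hd => by
    by_contra had
    exact hwa (hW.mul_mem_of_inv_mul_notMem hd had hw)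
  have hA_le : A ≤ Submodule.span R {a} * W := fun d hd =>
    Submodule.mem_span_singleton_mul.mpr ⟨_, haW d hd, mul_inv_cancel_left₀ ha0 d⟩
  by_cases hR : ∃ x ∈ A, a⁻¹ * x ∉ (1 : Submodule R Q)
  · obtain ⟨x, hx, hax⟩ := hR
    right
    rw [hW.tS_eq_span_singleton_mul ha hx hA_le hax, mul_left_comm]
    exact mul_le_mul_right hW.mul_le _
  left
  have hA_eq : A = Submodule.span R {a} := by
    refine le_antisymm (fun d hd => ?_) ((Submodule.span_singleton_le_iff_mem _ _).mpr ha)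
    obtain ⟨r, hr⟩ := Submodule.mem_one.mp (not_not.mp fun h => hR ⟨d, hd, h⟩)
    refine Submodule.mem_span_singleton.mpr ⟨r, ?_⟩
    rw [Algebra.smul_def, hr, mul_comm, mul_inv_cancel_left₀ ha0]
  have hU := isUnit_span_singleton (R := R) ha0
  rw [hA_eq, ← hU.unit_spec, tS_units]
  exact hU.unit.isUnit

end IsPVDValuationOverring

end StarOperations

section ValuationOverring

variable {V : Type*} [CommRing V] [IsDomain V] (R : Subring V)
  (Q : Type*) [Field Q] [Algebra R Q] [IsFractionRing R Q]

noncomputable def fractionFieldEmbedding : Q →+* FractionRing V :=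
  IsFractionRing.lift (g := (algebraMap V (FractionRing V)).comp R.subtype)
    ((IsFractionRing.injective V _).comp Subtype.val_injective)

variable {R Q} in
theorem fractionFieldEmbedding_algebraMap (r : R) :
    fractionFieldEmbedding R Q (algebraMap R Q r) = algebraMap V _ r :=
  IsFractionRing.lift_algebraMap _ r

/-- `V ∩ Q`, computed in the fraction field of `V`: `Q` need not contain `V` (e.g. when `V` is a
field, `R = k`). -/
noncomputable def valuationOverring : Submodule R Q where
  carrier := {q | ∃ v : V, algebraMap V _ v = fractionFieldEmbedding R Q q}
  zero_mem' := ⟨0, by rw [map_zero, map_zero]⟩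
  add_mem' := fun ⟨v, hv⟩ ⟨w, hw⟩ => ⟨v + w, by rw [map_add, map_add, hv, hw]⟩
  smul_mem' := fun r _ ⟨v, hv⟩ => ⟨r * v, by
    rw [Algebra.smul_def, map_mul, map_mul, hv, fractionFieldEmbedding_algebraMap]⟩

variable {R Q}

theorem mem_one_of_fractionFieldEmbedding_eq {q : Q} {v : V} (hv : v ∈ R)
    (h : algebraMap V _ v = fractionFieldEmbedding R Q q) : q ∈ (1 : Submodule R Q) :=
  Submodule.mem_one.mpr ⟨⟨v, hv⟩, (fractionFieldEmbedding R Q).injective <| by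
    rw [fractionFieldEmbedding_algebraMap, h]⟩

theorem isPVDValuationOverring_valuationOverring [ValuationRing V]
    {k : Subfield (IsLocalRing.ResidueField V)}
    (hR : R = Subring.comap (IsLocalRing.residue V) k.toSubring) :
    IsPVDValuationOverring (valuationOverring R Q) := by
  have memR (v : V) : v ∈ R ↔ IsLocalRing.residue V v ∈ k := by rw [hR]; rfl
  refine ⟨fun x hx => ?_, Submodule.mul_le.mpr fun a ha b hb => ?_, fun q => ?_, ?_, ?_⟩
  · obtain ⟨r, rfl⟩ := Submodule.mem_one.mp hx
    exact ⟨r, (fractionFieldEmbedding_algebraMap r).symm⟩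
  · obtain ⟨⟨v, hv⟩, ⟨w, hw⟩⟩ := And.intro ha hb
    exact ⟨v * w, by rw [map_mul, map_mul, hv, hw]⟩
  · rcases ValuationRing.isInteger_or_isInteger V (fractionFieldEmbedding R Q q) with
      ⟨v, hv⟩ | ⟨v, hv⟩
    · exact .inl ⟨v, hv⟩
    · exact .inr ⟨v, by rw [hv, map_inv₀]⟩
  · rintro q ⟨v, hv⟩ hq
    have hvu : ¬IsUnit v := fun hu => hq ⟨↑hu.unit⁻¹, by rw [map_units_inv, map_inv₀, ← hv]; rfl⟩
    refine mem_one_of_fractionFieldEmbedding_eq ((memR v).mpr ?_) hv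
    rw [(IsLocalRing.residue_eq_zero_iff v).mpr hvu]
    exact zero_mem k
  · rintro q hq ⟨v, hv⟩
    obtain ⟨r, rfl⟩ := Submodule.mem_one.mp hq
    rcases eq_or_ne r 0 with rfl | hr
    · simp
    have hr' : algebraMap V (FractionRing V) r ≠ 0 :=
      (map_ne_zero_iff _ (IsFractionRing.injective V _)).mpr (by simpa using hr)
    have hrv : (r : V) * v = 1 := by
      apply IsFractionRing.injective V (FractionRing V)
      rw [map_mul, hv, map_inv₀, fractionFieldEmbedding_algebraMap, map_one, mul_inv_cancel₀ hr']
    have hres : IsLocalRing.residue V r * IsLocalRing.residue V v = 1 := by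
      rw [← map_mul, hrv, map_one]
    refine mem_one_of_fractionFieldEmbedding_eq ((memR v).mpr ?_) hv
    rw [eq_inv_of_mul_eq_one_right hres]
    exact k.inv_mem ((memR r).mp r.2)

end ValuationOverring

theorem pvd_t_reduction_iff_t_closure_reduction_general (V : Type*) [CommRing V] [IsDomain V]
    [ValuationRing V] (k : Subfield (IsLocalRing.ResidueField V))
    (R : Subring V) (hR : R = Subring.comap (IsLocalRing.residue V) k.toSubring)
    (Q : Type*) [Field Q] [Algebra ↥R Q] [IsFractionRing ↥R Q]
    (J I : Ideal ↥R) :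
    (∃ n : ℕ, tI ↥R Q (J * I ^ n) = tI ↥R Q (I ^ (n + 1)))
      ↔ (∃ n : ℕ, tI ↥R Q J * (tI ↥R Q I) ^ n = (tI ↥R Q I) ^ (n + 1)) := by
  have hW := isPVDValuationOverring_valuationOverring (Q := Q) hR
  simp only [tI, idealToSub_mul, idealToSub_pow]
  exact exists_tS_mul_pow_eq_iff _ _
    ((hW.isUnit_tS_or_mul_tS_le _).imp id hW.tS_mul_eq_of_mul_le)

/-- Let `R` be a pseudo-valuation domain issued from `(V, M, k)`. Then for all nonzero
ideals `J ⊆ I` of `R`, `J` is a `t`-reduction of `I` iff `J_t` is a reduction of `I_t`. -/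
theorem pvd_t_reduction_iff_t_closure_reduction (V : Type*) [CommRing V] [IsDomain V]
    [ValuationRing V] (k : Subfield (IsLocalRing.ResidueField V))
    (R : Subring V) (hR : R = Subring.comap (IsLocalRing.residue V) k.toSubring)
    (Q : Type*) [Field Q] [Algebra ↥R Q] [IsFractionRing ↥R Q]
    (J I : Ideal ↥R) (hJ0 : J ≠ 0) (hI0 : I ≠ 0) (hJI : J ≤ I) :
    (∃ n : ℕ, tI ↥R Q (J * I ^ n) = tI ↥R Q (I ^ (n + 1)))
      ↔ (∃ n : ℕ, tI ↥R Q J * (tI ↥R Q I) ^ n = (tI ↥R Q I) ^ (n + 1)) :=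
  pvd_t_reduction_iff_t_closure_reduction_general V k R hR Q J I
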